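/- Theorem (outer bound on the exact p-value): for any p ∈ Δ_k with all coordinates positive and any p̂ ∈ Δ_{k,n}, the p-value p(p̂; p) := Σ_{q̂ ∈ Δ_{k,n} : P_p(q̂) ≤ P_p(p̂)} P_p(q̂) satisfies p(p̂; p) ≤ (n+1)^{2k} exp(−n · KL(p̂, p)). -/

import Mathlib

open Finset
open scoped Classical

noncomputable section

/-- The discrete simplex of empirical count vectors from `n` samples over `k` categories. -/
def discSimplex (k n : ℕ) : Finset (Fin k → ℕ) :=
  (Fintype.piFinset fun _ : Fin k => Finset.range (n + 1)).filter fun c => ∑ i, c i = n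

/-- Multinomial probability of observing the empirical count vector `c` under parameter `p`. -/
def multProb (k : ℕ) (p : Fin k → ℝ) (c : Fin k → ℕ) : ℝ :=
  (Nat.multinomial Finset.univ c : ℝ) * ∏ i, p i ^ c i

/-- The empirical distribution `p̂ = c / n` associated with the count vector `c`. -/
def emp (k n : ℕ) (c : Fin k → ℕ) : Fin k → ℝ := fun i => (c i : ℝ) / n

/-- Kullback–Leibler divergence `KL(q, p) = Σ_i q_i log(q_i / p_i)`
(with the convention `0 · log 0 = 0`, automatic since `0 * x = 0`). -/
def KLdiv (k : ℕ) (q p : Fin k → ℝ) : ℝ := ∑ i, q i * Real.log (q i / p i)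

lemma multProb_nonneg (k : ℕ) (p : Fin k → ℝ) (hp : ∀ i, 0 ≤ p i) (c : Fin k → ℕ) :
    0 ≤ multProb k p c := by
  exact mul_nonneg (Nat.cast_nonneg _) (Finset.prod_nonneg fun i _ => pow_nonneg (hp i) _)

lemma multProb_le_one (k n : ℕ) (q : Fin k → ℝ) (hq : ∀ i, 0 ≤ q i) (hq1 : ∑ i, q i = 1)
    (c : Fin k → ℕ) (hc : ∑ i, c i = n) : multProb k q c ≤ 1 := by
  have h := Finset.sum_pow_eq_sum_piAntidiag (Finset.univ : Finset (Fin k)) q n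
  rw [hq1, one_pow] at h
  have hmem : c ∈ Finset.piAntidiag (Finset.univ : Finset (Fin k)) n := by
    rw [Finset.mem_piAntidiag]
    exact ⟨hc, fun i _ => Finset.mem_univ i⟩
  calc multProb k q c ≤ ∑ d ∈ Finset.piAntidiag (Finset.univ : Finset (Fin k)) n,
        (Nat.multinomial Finset.univ d : ℝ) * ∏ i, q i ^ d i := by
        refine Finset.single_le_sum (f := fun d =>
          (Nat.multinomial Finset.univ d : ℝ) * ∏ i, q i ^ d i) (fun d _ => ?_) hmem
        exact mul_nonneg (Nat.cast_nonneg _) (Finset.prod_nonneg fun i _ => pow_nonneg (hq i) _)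
    _ = 1 := h.symm

lemma multProb_eq (k n : ℕ) (hn : 1 ≤ n) (p : Fin k → ℝ) (hp0 : ∀ i, 0 < p i)
    (c : Fin k → ℕ) :
    multProb k p c
      = multProb k (emp k n c) c * Real.exp (-(n : ℝ) * KLdiv k (emp k n c) p) := by
  have hnpos : (0 : ℝ) < n := by exact_mod_cast hn
  have hexp : Real.exp (-(n : ℝ) * KLdiv k (emp k n c) p)
      = ∏ i, Real.exp ((c i : ℝ) * Real.log (p i / emp k n c i)) := by
    rw [← Real.exp_sum]
    congr 1
    rw [KLdiv, Finset.mul_sum]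
    refine Finset.sum_congr rfl fun i _ => ?_
    rcases Nat.eq_zero_or_pos (c i) with h0 | hpos
    · simp [emp, h0]
    · have hq : 0 < emp k n c i := by
        have : (0 : ℝ) < (c i : ℝ) := by exact_mod_cast hpos
        exact div_pos this hnpos
      have hc : (n : ℝ) * emp k n c i = (c i : ℝ) := by
        have hn0 : (n : ℝ) ≠ 0 := ne_of_gt hnpos
        simp only [emp]
        field_simp
      rw [Real.log_div (ne_of_gt (hp0 i)) (ne_of_gt hq),
        Real.log_div (ne_of_gt hq) (ne_of_gt (hp0 i))]
      linear_combination (Real.log (p i) - Real.log (emp k n c i)) * hc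
  rw [hexp, multProb, multProb, mul_assoc, ← Finset.prod_mul_distrib]
  congr 1
  refine Finset.prod_congr rfl fun i _ => ?_
  rcases Nat.eq_zero_or_pos (c i) with h0 | hpos
  · simp [h0]
  · have hq : 0 < emp k n c i := by
      have : (0 : ℝ) < (c i : ℝ) := by exact_mod_cast hpos
      exact div_pos this hnpos
    rw [Real.exp_nat_mul, Real.exp_log (div_pos (hp0 i) hq), div_pow, ← mul_div_assoc,
      mul_comm, mul_div_assoc, div_self (pow_ne_zero _ (ne_of_gt hq)), mul_one]

/-- Outer bound on the exact p-value: for `p ∈ Δ_k` with all coordinates positive and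
`p̂ ∈ Δ_{k,n}`, `p(p̂; p) = Σ_{q̂ : P_p(q̂) ≤ P_p(p̂)} P_p(q̂) ≤ (n+1)^{2k} exp(-n·KL(p̂, p))`. -/
theorem pvalue_outer_bound (k n : ℕ) (hk : 2 ≤ k) (hn : 1 ≤ n)
    (p : Fin k → ℝ) (hp0 : ∀ i, 0 < p i) (hp1 : ∑ i, p i = 1)
    (c : Fin k → ℕ) (hc : c ∈ discSimplex k n) :
    ∑ d ∈ (discSimplex k n).filter (fun d => multProb k p d ≤ multProb k p c),
        multProb k p d
      ≤ ((n : ℝ) + 1) ^ (2 * k) * Real.exp (-(n : ℝ) * KLdiv k (emp k n c) p) := by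
  obtain ⟨-, hcsum⟩ := Finset.mem_filter.mp hc
  have hnpos : (0 : ℝ) < n := by exact_mod_cast hn
  -- emp c is a probability vector
  have hq0 : ∀ i, 0 ≤ emp k n c i := fun i => by
    exact div_nonneg (Nat.cast_nonneg _) hnpos.le
  have hq1 : ∑ i, emp k n c i = 1 := by
    unfold emp
    rw [← Finset.sum_div]
    rw [show (∑ i, (c i : ℝ)) = (n : ℝ) by exact_mod_cast congrArg Nat.cast hcsum]
    exact div_self (ne_of_gt hnpos)
  have hkey : multProb k p c ≤ Real.exp (-(n : ℝ) * KLdiv k (emp k n c) p) := by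
    rw [multProb_eq k n hn p hp0 c]
    have h1 : multProb k (emp k n c) c ≤ 1 := multProb_le_one k n _ hq0 hq1 c hcsum
    nlinarith [Real.exp_pos (-(n : ℝ) * KLdiv k (emp k n c) p),
      multProb_nonneg k (emp k n c) hq0 c]
  -- bound the sum by card * multProb p c
  set S := (discSimplex k n).filter (fun d => multProb k p d ≤ multProb k p c) with hS
  have hcard : (S.card : ℝ) ≤ ((n : ℝ) + 1) ^ k := by
    have h1 : S.card ≤ (discSimplex k n).card := Finset.card_filter_le _ _
    have h2 : (discSimplex k n).card ≤ (n + 1) ^ k := by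
      calc (discSimplex k n).card
          ≤ (Fintype.piFinset fun _ : Fin k => Finset.range (n + 1)).card :=
            Finset.card_filter_le _ _
        _ = (n + 1) ^ k := by simp [Fintype.card_piFinset]
    calc (S.card : ℝ) ≤ ((n + 1 : ℕ) ^ k : ℕ) := by exact_mod_cast h1.trans h2
      _ = ((n : ℝ) + 1) ^ k := by push_cast; ring
  have hsum : ∑ d ∈ S, multProb k p d ≤ (S.card : ℝ) * multProb k p c := by
    calc ∑ d ∈ S, multProb k p d ≤ ∑ _d ∈ S, multProb k p c := by
          refine Finset.sum_le_sum fun d hd => ?_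
          exact (Finset.mem_filter.mp hd).2
      _ = (S.card : ℝ) * multProb k p c := by rw [Finset.sum_const, nsmul_eq_mul]
  have hmpc : 0 ≤ multProb k p c := multProb_nonneg k p (fun i => (hp0 i).le) c
  have hpow : ((n : ℝ) + 1) ^ k ≤ ((n : ℝ) + 1) ^ (2 * k) := by
    refine pow_le_pow_right₀ ?_ (by omega)
    linarith
  calc ∑ d ∈ S, multProb k p d ≤ (S.card : ℝ) * multProb k p c := hsum
    _ ≤ ((n : ℝ) + 1) ^ k * Real.exp (-(n : ℝ) * KLdiv k (emp k n c) p) := by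
        have := Real.exp_pos (-(n : ℝ) * KLdiv k (emp k n c) p)
        have h0 : (0 : ℝ) ≤ ((n : ℝ) + 1) ^ k := by positivity
        nlinarith
    _ ≤ ((n : ℝ) + 1) ^ (2 * k) * Real.exp (-(n : ℝ) * KLdiv k (emp k n c) p) := by
        have := Real.exp_pos (-(n : ℝ) * KLdiv k (emp k n c) p)
        nlinarith
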